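/- Let X be a finite simple graph on m ≥ 3 vertices, let g be a positive divisor of m, and suppose X admits proper Laplacian fractional revival between vertices a and b at time 2π/g. Let Y be any finite simple graph on n vertices with g dividing n. Then the join X + Y admits proper Laplacian fractional revival between a and b at time 2π/g. -/

import Mathlib

open Matrix

noncomputable def lapR {V : Type*} [Fintype V] [DecidableEq V] (G : SimpleGraph V) :
    Matrix V V ℝ :=
  letI := Classical.decRel G.Adj
  G.lapMatrix ℝ

noncomputable def lapC {V : Type*} [Fintype V] [DecidableEq V] (G : SimpleGraph V) :
    Matrix V V ℂ :=
  (lapR G).map Complex.ofReal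

noncomputable def transition {V : Type*} [Fintype V] [DecidableEq V] (G : SimpleGraph V)
    (t : ℝ) : Matrix V V ℂ :=
  NormedSpace.exp ((Complex.I * (t : ℂ)) • lapC G)

/-- proper Laplacian fractional revival between distinct vertices `a, b` at time `τ`. -/
def properLaFR {V : Type*} [Fintype V] [DecidableEq V] (G : SimpleGraph V) (a b : V)
    (τ : ℝ) : Prop :=
  a ≠ b ∧ ∃ α β : ℂ, β ≠ 0 ∧
    transition G τ *ᵥ Pi.single a 1 =
      α • (Pi.single a 1 : V → ℂ) + β • (Pi.single b 1 : V → ℂ)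

/-- Laplacian periodicity at vertex `a` at time `τ`. -/
def periodicAt {V : Type*} [Fintype V] [DecidableEq V] (G : SimpleGraph V) (a : V)
    (τ : ℝ) : Prop :=
  ∃ α : ℂ, transition G τ *ᵥ Pi.single a 1 = α • (Pi.single a 1 : V → ℂ)

/-- The matrix of the orthogonal projection onto the `μ`-eigenspace of the Laplacian. -/
noncomputable def eigProj {V : Type*} [Fintype V] [DecidableEq V] (G : SimpleGraph V)
    (μ : ℝ) : Matrix V V ℝ :=
  Matrix.toEuclideanLin.symm
    ((Module.End.eigenspace (Matrix.toEuclideanLin (lapR G)) μ).subtype ∘ₗ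
      (Submodule.orthogonalProjectionOnto
        (Module.End.eigenspace (Matrix.toEuclideanLin (lapR G)) μ) :
          EuclideanSpace ℝ V →L[ℝ] _).toLinearMap)

def StronglyCospectral {V : Type*} [Fintype V] [DecidableEq V] (G : SimpleGraph V)
    (a b : V) : Prop :=
  ∀ μ : ℝ, eigProj G μ *ᵥ Pi.single a 1 = eigProj G μ *ᵥ Pi.single b 1 ∨
    eigProj G μ *ᵥ Pi.single a 1 = -(eigProj G μ *ᵥ Pi.single b 1)

def PhiPlus {V : Type*} [Fintype V] [DecidableEq V] (G : SimpleGraph V) (a b : V) :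
    Set ℝ :=
  {μ | eigProj G μ *ᵥ Pi.single a 1 = eigProj G μ *ᵥ Pi.single b 1 ∧
    eigProj G μ *ᵥ Pi.single a 1 ≠ 0}

def PhiMinus {V : Type*} [Fintype V] [DecidableEq V] (G : SimpleGraph V) (a b : V) :
    Set ℝ :=
  {μ | eigProj G μ *ᵥ Pi.single a 1 = -(eigProj G μ *ᵥ Pi.single b 1) ∧
    eigProj G μ *ᵥ Pi.single a 1 ≠ 0}

def eigSupport {V : Type*} [Fintype V] [DecidableEq V] (G : SimpleGraph V) (a : V) :
    Set ℝ :=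
  {μ | eigProj G μ *ᵥ Pi.single a 1 ≠ 0}

/-- `r` is an integer multiple of the natural number `g`. -/
def intDvd (g : ℕ) (r : ℝ) : Prop := ∃ k : ℤ, r = (g : ℝ) * k

/-- The join of two simple graphs. -/
def graphJoin {V W : Type*} (G : SimpleGraph V) (H : SimpleGraph W) :
    SimpleGraph (V ⊕ W) where
  Adj x y :=
    match x, y with
    | Sum.inl a, Sum.inl b => G.Adj a b
    | Sum.inl _, Sum.inr _ => True
    | Sum.inr _, Sum.inl _ => True
    | Sum.inr a, Sum.inr b => H.Adj a b
  symm := by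
    constructor
    rintro (a | a) (b | b) h
    · exact G.adj_symm h
    · trivial
    · trivial
    · exact H.adj_symm h
  loopless := by
    constructor
    rintro (a | a) h
    · exact G.loopless.irrefl a h
    · exact H.loopless.irrefl a h

/-! On vectors `y ⊕ 0` with `∑ y = 0` the Laplacian of `X + Y` acts as `L_X + n`, so there
`U_{X+Y}(τ)` acts as `e^{iτn} U_X(τ)`, and `e^{iτn} = 1` at `τ = 2π/g` since `g ∣ n`. The rest of
`e_a` is a multiple of `1_V ⊕ 0`, which combines the all-ones vector (eigenvalue `0`) with
`n 1_V ⊕ -m 1_W` (eigenvalue `m + n`); both are fixed at time `2π/g` because `g ∣ m + n`. -/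

open scoped Nat

section MatrixExp

variable {𝕂 ι κ : Type*} [RCLike 𝕂] [Fintype ι] [DecidableEq ι] [Fintype κ] [DecidableEq κ]

theorem Matrix.hasSum_exp_mulVec (M : Matrix ι ι 𝕂) (v : ι → 𝕂) :
    HasSum (fun n : ℕ => (n !⁻¹ : 𝕂) • (M ^ n *ᵥ v)) (NormedSpace.exp M *ᵥ v) := by
  -- any matrix norm will do: they all induce the product topology in which `exp` is defined
  open scoped Norms.Operator in
  convert (NormedSpace.exp_series_hasSum_exp' (𝕂 := 𝕂) M).map (mulVec.addMonoidHomLeft v)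
      (continuous_id.matrix_mulVec continuous_const) using 1
  · ext n : 1
    exact (smul_mulVec _ _ _).symm
  · rfl

theorem Matrix.exp_mulVec_of_mulVec_eq_smul {M : Matrix ι ι 𝕂} {v : ι → 𝕂} {μ : 𝕂}
    (h : M *ᵥ v = μ • v) : NormedSpace.exp M *ᵥ v = NormedSpace.exp μ • v := by
  have hpow : ∀ n : ℕ, M ^ n *ᵥ v = μ ^ n • v := by
    intro n
    induction n with
    | zero => simp
    | succ n ih => rw [pow_succ', ← mulVec_mulVec, ih, mulVec_smul, h, smul_smul, ← pow_succ]
  refine (hasSum_exp_mulVec M v).unique ?_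
  simpa only [hpow, smul_smul, smul_eq_mul] using
    (NormedSpace.exp_series_hasSum_exp' (𝕂 := 𝕂) μ).smul_const v

theorem Matrix.exp_mulVec_map_of_intertwines {M : Matrix ι ι 𝕂} {M' : Matrix κ κ 𝕂}
    (f : (ι → 𝕂) →ₗ[𝕂] (κ → 𝕂)) {p : (ι → 𝕂) → Prop} (hp : ∀ x, p x → p (M *ᵥ x))
    (hf : ∀ x, p x → M' *ᵥ f x = f (M *ᵥ x)) {x : ι → 𝕂} (hx : p x) :
    NormedSpace.exp M' *ᵥ f x = f (NormedSpace.exp M *ᵥ x) := by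
  have hpow : ∀ n : ℕ, p (M ^ n *ᵥ x) ∧ M' ^ n *ᵥ f x = f (M ^ n *ᵥ x) := by
    intro n
    induction n with
    | zero => simpa using hx
    | succ n ih =>
      simp only [pow_succ', ← mulVec_mulVec, ih.2, hf _ ih.1, hp _ ih.1, and_self]
  refine (hasSum_exp_mulVec M' (f x)).unique ?_
  simpa only [Function.comp_def, map_smul, (hpow _).2] using
    (hasSum_exp_mulVec M x).map f (LinearMap.continuous_of_finiteDimensional f)

theorem Matrix.exp_add_smul_one_mulVec (M : Matrix ι ι 𝕂) (s : 𝕂) (v : ι → 𝕂) :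
    NormedSpace.exp (M + s • 1) *ᵥ v = NormedSpace.exp s • (NormedSpace.exp M *ᵥ v) := by
  have hs : (s • 1 : Matrix ι ι 𝕂) *ᵥ v = s • v := by rw [smul_mulVec, one_mulVec]
  rw [exp_add_of_commute _ _ ((Commute.one_right M).smul_right s), ← mulVec_mulVec,
    exp_mulVec_of_mulVec_eq_smul hs, mulVec_smul]

end MatrixExp

section Laplacian

variable {V : Type*} [Fintype V] [DecidableEq V] (G : SimpleGraph V)

theorem lapC_eq_lapMatrix [DecidableRel G.Adj] : lapC G = G.lapMatrix ℂ := by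
  have hR : lapR G = G.lapMatrix ℝ := by
    unfold lapR
    congr!
  ext i j
  simp only [lapC, hR, SimpleGraph.lapMatrix, SimpleGraph.degMatrix, map_apply,
    Matrix.sub_apply, diagonal_apply, SimpleGraph.adjMatrix_apply]
  split_ifs <;> simp

theorem lapC_mulVec_apply [DecidableRel G.Adj] (x : V → ℂ) (v : V) :
    (lapC G *ᵥ x) v = G.degree v * x v - ∑ u ∈ G.neighborFinset v, x u := by
  rw [lapC_eq_lapMatrix, SimpleGraph.lapMatrix_mulVec_apply]

theorem lapC_mulVec_const (c : ℂ) : lapC G *ᵥ (fun _ => c) = 0 := by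
  classical
  ext v
  simp [lapC_mulVec_apply]

theorem sum_lapC_mulVec (x : V → ℂ) : ∑ v, (lapC G *ᵥ x) v = 0 := by
  classical
  rw [lapC_eq_lapMatrix]
  calc ∑ v, (G.lapMatrix ℂ *ᵥ x) v = (fun _ => 1) ⬝ᵥ (G.lapMatrix ℂ *ᵥ x) := by
        simp [dotProduct]
    _ = ((G.lapMatrix ℂ)ᵀ *ᵥ fun _ => 1) ⬝ᵥ x := by rw [dotProduct_mulVec, mulVec_transpose]
    _ = 0 := by
        rw [(G.isSymm_lapMatrix ℂ).eq, SimpleGraph.lapMatrix_mulVec_const_eq_zero,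
          zero_dotProduct]

theorem transition_mulVec_of_lapC_mulVec_eq_smul (τ : ℝ) {x : V → ℂ} {μ : ℂ}
    (h : lapC G *ᵥ x = μ • x) :
    transition G τ *ᵥ x = Complex.exp (Complex.I * τ * μ) • x := by
  rw [transition, exp_mulVec_of_mulVec_eq_smul (by rw [smul_mulVec, h, smul_smul]),
    Complex.exp_eq_exp_ℂ]

theorem transition_mulVec_const_one (τ : ℝ) :
    transition G τ *ᵥ (fun _ => 1) = fun _ => 1 := by
  rw [transition_mulVec_of_lapC_mulVec_eq_smul G τ (μ := 0) (by simp [lapC_mulVec_const]),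
    mul_zero, Complex.exp_zero, one_smul]

end Laplacian

theorem Complex.exp_I_mul_two_pi_div_mul_of_dvd {g n : ℕ} (h : g ∣ n) :
    Complex.exp (Complex.I * ((2 * Real.pi / g : ℝ) : ℂ) * n) = 1 := by
  obtain ⟨k, rfl⟩ := h
  rcases g.eq_zero_or_pos with rfl | hg
  · simp
  · have hg' : (g : ℂ) ≠ 0 := by exact_mod_cast hg.ne'
    convert Complex.exp_nat_mul_two_pi_mul_I k using 2
    push_cast
    field_simp

section GraphJoin

variable {V W : Type*} [Fintype V] [Fintype W] (X : SimpleGraph V) (Y : SimpleGraph W)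

open Classical in
theorem graphJoin_sum_neighborFinset_inl {M : Type*} [AddCommMonoid M] (f : V ⊕ W → M)
    (v : V) :
    ∑ j ∈ (graphJoin X Y).neighborFinset (Sum.inl v), f j =
      ∑ u ∈ X.neighborFinset v, f (Sum.inl u) + ∑ w, f (Sum.inr w) := by
  simp only [SimpleGraph.neighborFinset_eq_filter, Finset.sum_filter, Fintype.sum_sum_type]
  congr 1
  simp [graphJoin]

open Classical in
theorem graphJoin_sum_neighborFinset_inr {M : Type*} [AddCommMonoid M] (f : V ⊕ W → M)
    (w : W) :
    ∑ j ∈ (graphJoin X Y).neighborFinset (Sum.inr w), f j =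
      ∑ v, f (Sum.inl v) + ∑ u ∈ Y.neighborFinset w, f (Sum.inr u) := by
  simp only [SimpleGraph.neighborFinset_eq_filter, Finset.sum_filter, Fintype.sum_sum_type]
  congr 1
  simp [graphJoin]

open Classical in
theorem graphJoin_degree_inl (v : V) :
    (graphJoin X Y).degree (Sum.inl v) = X.degree v + Fintype.card W := by
  simpa using graphJoin_sum_neighborFinset_inl X Y (fun _ => (1 : ℕ)) v

open Classical in
theorem graphJoin_degree_inr (w : W) :
    (graphJoin X Y).degree (Sum.inr w) = Fintype.card V + Y.degree w := by
  simpa using graphJoin_sum_neighborFinset_inr X Y (fun _ => (1 : ℕ)) w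

variable [DecidableEq V] [DecidableEq W]

theorem lapC_graphJoin_mulVec_inl (y : V → ℂ) (z : W → ℂ) (v : V) :
    (lapC (graphJoin X Y) *ᵥ Sum.elim y z) (Sum.inl v) =
      (lapC X *ᵥ y) v + Fintype.card W * y v - ∑ w, z w := by
  classical
  rw [lapC_mulVec_apply, lapC_mulVec_apply, graphJoin_sum_neighborFinset_inl,
    graphJoin_degree_inl]
  simp only [Sum.elim_inl, Sum.elim_inr]
  push_cast
  ring

theorem lapC_graphJoin_mulVec_inr (y : V → ℂ) (z : W → ℂ) (w : W) :
    (lapC (graphJoin X Y) *ᵥ Sum.elim y z) (Sum.inr w) =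
      (lapC Y *ᵥ z) w + Fintype.card V * z w - ∑ v, y v := by
  classical
  rw [lapC_mulVec_apply, lapC_mulVec_apply, graphJoin_sum_neighborFinset_inr,
    graphJoin_degree_inr]
  simp only [Sum.elim_inl, Sum.elim_inr]
  push_cast
  ring

theorem lapC_graphJoin_mulVec_elim_zero {y : V → ℂ} (hy : ∑ v, y v = 0) :
    lapC (graphJoin X Y) *ᵥ Sum.elim y 0 =
      Sum.elim ((lapC X + (Fintype.card W : ℂ) • 1) *ᵥ y) 0 := by
  ext (v | w)
  · simp [lapC_graphJoin_mulVec_inl, add_mulVec, smul_mulVec]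
  · simp [lapC_graphJoin_mulVec_inr, hy]

theorem lapC_graphJoin_mulVec_elim_card :
    lapC (graphJoin X Y) *ᵥ
        Sum.elim (fun _ => (Fintype.card W : ℂ)) (fun _ => -(Fintype.card V : ℂ)) =
      ((Fintype.card V + Fintype.card W : ℕ) : ℂ) •
        Sum.elim (fun _ => (Fintype.card W : ℂ)) (fun _ => -(Fintype.card V : ℂ)) := by
  ext (v | w)
  · simp [lapC_graphJoin_mulVec_inl, lapC_mulVec_const]
    ring
  · simp [lapC_graphJoin_mulVec_inr, lapC_mulVec_const]
    ring

theorem transition_graphJoin_mulVec_elim_zero (τ : ℝ)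
    (hτ : Complex.exp (Complex.I * τ * Fintype.card W) = 1) {y : V → ℂ}
    (hy : ∑ v, y v = 0) :
    transition (graphJoin X Y) τ *ᵥ Sum.elim y 0 = Sum.elim (transition X τ *ᵥ y) 0 := by
  let c : ℂ := Complex.I * τ
  let f : (V → ℂ) →ₗ[ℂ] (V ⊕ W → ℂ) :=
    (LinearEquiv.sumArrowLequivProdArrow V W ℂ ℂ).symm.toLinearMap ∘ₗ LinearMap.inl ℂ _ _
  have hf : ∀ y, f y = Sum.elim y 0 := fun _ => rfl
  have key := exp_mulVec_map_of_intertwines (M := c • (lapC X + (Fintype.card W : ℂ) • 1))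
    (M' := c • lapC (graphJoin X Y)) f (p := fun y => ∑ v, y v = 0) ?_ ?_ hy
  · rw [hf, hf, smul_add, smul_smul, exp_add_smul_one_mulVec, ← Complex.exp_eq_exp_ℂ, hτ,
      one_smul] at key
    exact key
  · intro z hz
    simp only [smul_mulVec, add_mulVec, one_mulVec, Pi.smul_apply, Pi.add_apply, smul_eq_mul,
      ← Finset.mul_sum, Finset.sum_add_distrib, sum_lapC_mulVec, hz, mul_zero, add_zero]
  · intro z hz
    rw [hf, hf, smul_mulVec, lapC_graphJoin_mulVec_elim_zero X Y hz, smul_mulVec]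
    ext (v | w) <;> simp

theorem transition_graphJoin_mulVec_elim_one_zero [Nonempty V] (τ : ℝ)
    (hτ : Complex.exp (Complex.I * τ * (Fintype.card V + Fintype.card W : ℕ)) = 1) :
    transition (graphJoin X Y) τ *ᵥ Sum.elim (fun _ => 1) 0 = Sum.elim (fun _ => 1) 0 := by
  set u : V ⊕ W → ℂ :=
    Sum.elim (fun _ => (Fintype.card W : ℂ)) (fun _ => -(Fintype.card V : ℂ))
  have hN : ((Fintype.card V + Fintype.card W : ℕ) : ℂ) ≠ 0 :=
    Nat.cast_ne_zero.mpr (Nat.add_pos_left Fintype.card_pos _).ne'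
  have hdecomp : ((Fintype.card V + Fintype.card W : ℕ) : ℂ) • Sum.elim (fun _ => 1) 0 =
      (Fintype.card V : ℂ) • (fun _ => 1) + u := by
    ext (v | w) <;> simp [u]
  have hu : transition (graphJoin X Y) τ *ᵥ u = u := by
    rw [transition_mulVec_of_lapC_mulVec_eq_smul _ τ (lapC_graphJoin_mulVec_elim_card X Y), hτ,
      one_smul]
  refine smul_right_injective _ hN ?_
  dsimp only
  rw [← mulVec_smul, hdecomp, mulVec_add, mulVec_smul, transition_mulVec_const_one, hu]

theorem transition_graphJoin_mulVec_single_inl (τ : ℝ)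
    (hn : Complex.exp (Complex.I * τ * Fintype.card W) = 1)
    (hmn : Complex.exp (Complex.I * τ * (Fintype.card V + Fintype.card W : ℕ)) = 1) (a : V) :
    transition (graphJoin X Y) τ *ᵥ Pi.single (Sum.inl a) 1 =
      Sum.elim (transition X τ *ᵥ Pi.single a 1) 0 := by
  have : Nonempty V := ⟨a⟩
  set m : ℂ := (Fintype.card V : ℂ)
  have hm : m ≠ 0 := by simp [m, Fintype.card_ne_zero]
  set x : V → ℂ := Pi.single a 1 - m⁻¹ • fun _ => 1
  have hx : ∑ v, x v = 0 := by simp [x, Finset.sum_sub_distrib, m, hm]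
  have hsplit : (Pi.single (Sum.inl a) 1 : V ⊕ W → ℂ) =
      Sum.elim x 0 + m⁻¹ • Sum.elim (fun _ => 1) 0 := by
    ext (v | w) <;> simp [x, Pi.single_apply]
  have hsingle : (Pi.single a 1 : V → ℂ) = x + m⁻¹ • fun _ => 1 := by simp [x]
  rw [hsplit, mulVec_add, mulVec_smul, transition_graphJoin_mulVec_elim_zero X Y τ hn hx,
    transition_graphJoin_mulVec_elim_one_zero X Y τ hmn, hsingle, mulVec_add, mulVec_smul,
    transition_mulVec_const_one]
  ext (v | w) <;> simp

end GraphJoin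

theorem join_properLaFR_general {V W : Type*} [Fintype V] [DecidableEq V]
    [Fintype W] [DecidableEq W]
    (X : SimpleGraph V) (Y : SimpleGraph W) (m n g : ℕ)
    (hm : Fintype.card V = m) (hgm : g ∣ m)
    (hn : Fintype.card W = n) (hgn : g ∣ n)
    (a b : V) (h : properLaFR X a b (2 * Real.pi / (g : ℝ))) :
    properLaFR (graphJoin X Y) (Sum.inl a) (Sum.inl b) (2 * Real.pi / (g : ℝ)) := by
  subst hm hn
  obtain ⟨hab, α, β, hβ, hX⟩ := h
  refine ⟨Sum.inl_injective.ne hab, α, β, hβ, ?_⟩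
  rw [transition_graphJoin_mulVec_single_inl X Y _ (Complex.exp_I_mul_two_pi_div_mul_of_dvd hgn)
    (Complex.exp_I_mul_two_pi_div_mul_of_dvd (hgm.add hgn)), hX]
  ext (v | w) <;> simp [Pi.single_apply]

/-- If `X` on `m ≥ 3` vertices has proper LaFR between `a`
and `b` at time `2π/g` with `g ∣ m`, and `g` divides the number of vertices of
`Y`, then the join `X + Y` has proper LaFR between `a` and `b` at `2π/g`. -/
theorem join_properLaFR {V W : Type*} [Fintype V] [DecidableEq V]
    [Fintype W] [DecidableEq W]
    (X : SimpleGraph V) (Y : SimpleGraph W) (m n g : ℕ)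
    (hm : Fintype.card V = m) (h3 : 3 ≤ m) (hg : 0 < g) (hgm : g ∣ m)
    (hn : Fintype.card W = n) (hgn : g ∣ n)
    (a b : V) (h : properLaFR X a b (2 * Real.pi / (g : ℝ))) :
    properLaFR (graphJoin X Y) (Sum.inl a) (Sum.inl b) (2 * Real.pi / (g : ℝ)) :=
  join_properLaFR_general X Y m n g hm hgm hn hgn a b h
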